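/- Let f⋆ and f be probability densities on [0,τ] with c.d.f.s F⋆, F, and let H̄⋆ : [0,τ] → (0,1] be a nonincreasing function and h⋆ ≥ 0. Define g⋆(s,1) = f⋆(s)H̄⋆(s), g⋆(s,0) = h⋆(s)(1 - F⋆(s)) and similarly for g. Then d_TV(g⋆, g) ≥ H̄⋆(τ) · d_TV(f⋆, f), where d_TV(g⋆,g) = (1/2)Σ_{d∈{0,1}} ∫₀^τ |g⋆(s,d) - g(s,d)| ds and d_TV(f⋆,f) = (1/2)∫₀^τ |f⋆ - f|. -/
import Mathlib


open MeasureTheory Set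

/-- the total variation between the joint (censored) observation densities
dominates the survival-time total variation: d_TV(g⋆,g) ≥ H̄⋆(τ)·d_TV(f⋆,f). -/
theorem stmt2 (τ : ℝ) (hτ : 0 ≤ τ)
    (fstar f hstar Fstar F Hbar : ℝ → ℝ)
    (hH_anti : AntitoneOn Hbar (Icc 0 τ))
    (hH_pos : ∀ s ∈ Icc (0:ℝ) τ, 0 < Hbar s)
    (hH_le : ∀ s ∈ Icc (0:ℝ) τ, Hbar s ≤ 1)
    (hhstar : ∀ s ∈ Icc (0:ℝ) τ, 0 ≤ hstar s)
    (hfstar : ∀ s ∈ Icc (0:ℝ) τ, 0 ≤ fstar s)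
    (hf : ∀ s ∈ Icc (0:ℝ) τ, 0 ≤ f s)
    (hfd : ∫ s in Icc (0:ℝ) τ, fstar s = 1) (hfd' : ∫ s in Icc (0:ℝ) τ, f s = 1)
    (hint : IntegrableOn (fun s => |fstar s - f s|) (Icc 0 τ))
    (hint1 : IntegrableOn (fun s => |fstar s * Hbar s - f s * Hbar s|) (Icc 0 τ))
    (hint0 : IntegrableOn
      (fun s => |hstar s * (1 - Fstar s) - hstar s * (1 - F s)|) (Icc 0 τ)) :
    Hbar τ * ((1/2) * ∫ s in Icc (0:ℝ) τ, |fstar s - f s|)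
      ≤ (1/2) * ((∫ s in Icc (0:ℝ) τ, |fstar s * Hbar s - f s * Hbar s|)
          + ∫ s in Icc (0:ℝ) τ, |hstar s * (1 - Fstar s) - hstar s * (1 - F s)|) := by
  have hmem : τ ∈ Icc (0:ℝ) τ := ⟨hτ, le_refl τ⟩
  have key : ∫ s in Icc (0:ℝ) τ, Hbar τ * |fstar s - f s|
      ≤ ∫ s in Icc (0:ℝ) τ, |fstar s * Hbar s - f s * Hbar s| := by
    apply setIntegral_mono_on (hint.const_mul _) hint1 measurableSet_Icc
    intro s hs
    have h1 : |fstar s * Hbar s - f s * Hbar s| = |fstar s - f s| * Hbar s := by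
      rw [← sub_mul, abs_mul, abs_of_pos (hH_pos s hs)]
    rw [h1, mul_comm]
    exact mul_le_mul_of_nonneg_left (hH_anti hs hmem hs.2) (abs_nonneg _)
  have h0 : 0 ≤ ∫ s in Icc (0:ℝ) τ, |hstar s * (1 - Fstar s) - hstar s * (1 - F s)| :=
    setIntegral_nonneg measurableSet_Icc fun s _ => abs_nonneg _
  have : Hbar τ * ∫ s in Icc (0:ℝ) τ, |fstar s - f s|
      ≤ ∫ s in Icc (0:ℝ) τ, |fstar s * Hbar s - f s * Hbar s| := by
    rw [← integral_const_mul]; exact key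
  nlinarith
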